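/- (Lemma 1, part 3) In the secure aggregation with an oblivious server model, assuming only the correctness constraint, the joint entropy of all first-phase messages satisfies H(X_1, X_2, …, X_K) ≥ K·L. -/

import Mathlib

open Classical
open scoped BigOperators

/-- Probability of the event `E` under the probability mass function `p`
on a finite sample space `Ω`. -/
noncomputable def pr {Ω : Type*} [Fintype Ω] (p : Ω → ℝ) (E : Ω → Prop) : ℝ :=
  ∑ ω, if E ω then p ω else 0

/-- Shannon entropy of the random variable `X` in base-`q` units. -/
noncomputable def ent {Ω α : Type*} [Fintype Ω] [Fintype α] (q : ℕ) (p : Ω → ℝ)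
    (X : Ω → α) : ℝ :=
  -∑ a, pr p (fun ω => X ω = a) * Real.logb q (pr p (fun ω => X ω = a))

/-- Conditional entropy `H(X | Y) = H(X, Y) − H(Y)`, base `q`. -/
noncomputable def condEnt {Ω α β : Type*} [Fintype Ω] [Fintype α] [Fintype β]
    (q : ℕ) (p : Ω → ℝ) (X : Ω → α) (Y : Ω → β) : ℝ :=
  ent q p (fun ω => (X ω, Y ω)) - ent q p Y

/-- Mutual information `I(X ; Y) = H(X) + H(Y) − H(X, Y)`, base `q`. -/
noncomputable def mutInf {Ω α β : Type*} [Fintype Ω] [Fintype α] [Fintype β]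
    (q : ℕ) (p : Ω → ℝ) (X : Ω → α) (Y : Ω → β) : ℝ :=
  ent q p X + ent q p Y - ent q p (fun ω => (X ω, Y ω))

/-- Conditional mutual information
`I(X ; Y | Z) = H(X, Z) + H(Y, Z) − H(X, Y, Z) − H(Z)`, base `q`. -/
noncomputable def condMutInf {Ω α β γ : Type*} [Fintype Ω] [Fintype α] [Fintype β] [Fintype γ]
    (q : ℕ) (p : Ω → ℝ) (X : Ω → α) (Y : Ω → β) (Z : Ω → γ) : ℝ :=
  ent q p (fun ω => (X ω, Z ω)) + ent q p (fun ω => (Y ω, Z ω))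
    - ent q p (fun ω => (X ω, Y ω, Z ω)) - ent q p Z

section helpers
variable {Ω : Type*} [Fintype Ω] {p : Ω → ℝ}

lemma pr_nonneg (hp0 : ∀ ω, 0 ≤ p ω) (E : Ω → Prop) : 0 ≤ pr p E := by
  refine Finset.sum_nonneg fun ω _ => ?_
  split <;> simp [hp0]

lemma pr_congr {E E' : Ω → Prop} (h : ∀ ω, E ω ↔ E' ω) : pr p E = pr p E' := by
  unfold pr; exact Finset.sum_congr rfl fun ω _ => by rw [h ω]

lemma pr_mono (hp0 : ∀ ω, 0 ≤ p ω) {E E' : Ω → Prop} (h : ∀ ω, E ω → E' ω) :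
    pr p E ≤ pr p E' := by
  refine Finset.sum_le_sum fun ω _ => ?_
  by_cases hE : E ω
  · simp [hE, h ω hE]
  · simp only [hE, if_false]
    split <;> simp [hp0]

lemma pr_false : pr p (fun _ => False) = 0 := by simp [pr]

lemma pr_fiber {γ : Type*} [Fintype γ] (E : Ω → Prop) (G : Ω → γ) :
    pr p E = ∑ g, pr p (fun ω => E ω ∧ G ω = g) := by
  unfold pr
  rw [Finset.sum_comm]
  refine Finset.sum_congr rfl fun ω _ => ?_
  by_cases hE : E ω
  · simp [hE]
  · simp [hE]

lemma pr_true (hp1 : (∑ ω, p ω) = 1) : pr p (fun _ => True) = 1 := by simp [pr, hp1]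

/-- If `H(S | V) = 0` then `S` is determined by `V` on positive-probability atoms. -/
lemma det {α β : Type*} [Fintype α] [Fintype β] {q : ℕ} (hq : (1:ℝ) < (q:ℝ))
    (hp0 : ∀ ω, 0 ≤ p ω) (S : Ω → α) (V : Ω → β)
    (h : condEnt q p S V = 0) {a a' : α} {v : β}
    (ha : 0 < pr p (fun ω => S ω = a ∧ V ω = v))
    (ha' : 0 < pr p (fun ω => S ω = a' ∧ V ω = v)) : a = a' := by
  set f : α → β → ℝ := fun a v => pr p (fun ω => S ω = a ∧ V ω = v) with hf
  set g : β → ℝ := fun v => pr p (fun ω => V ω = v) with hg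
  have hfnn : ∀ a v, 0 ≤ f a v := fun a v => pr_nonneg hp0 _
  have hgf : ∀ v, g v = ∑ a, f a v := by
    intro v
    rw [hg]
    simp only
    rw [pr_fiber (fun ω => V ω = v) S]
    exact Finset.sum_congr rfl fun a _ => pr_congr fun ω => by tauto
  have hfg : ∀ a v, f a v ≤ g v := fun a v => pr_mono hp0 fun ω hω => hω.2
  have hent : condEnt q p S V
      = ∑ v, ∑ a, f a v * (Real.logb q (g v) - Real.logb q (f a v)) := by
    unfold condEnt ent
    have e1 : ∀ a v, pr p (fun ω => (S ω, V ω) = (a, v)) = f a v := by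
      intro a v; exact pr_congr fun ω => by simp [Prod.ext_iff]
    rw [Fintype.sum_prod_type]
    simp only [e1]
    have expand : ∀ v : β, ∑ a, f a v * (Real.logb q (g v) - Real.logb q (f a v))
        = g v * Real.logb q (g v) - ∑ a, f a v * Real.logb q (f a v) := by
      intro v
      simp only [mul_sub]
      rw [Finset.sum_sub_distrib, ← Finset.sum_mul, ← hgf v]
    simp only [expand, Finset.sum_sub_distrib]
    rw [Finset.sum_comm]
    ring_nf
    rfl
  have tnn : ∀ v a, 0 ≤ f a v * (Real.logb q (g v) - Real.logb q (f a v)) := by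
    intro v a
    rcases (hfnn a v).eq_or_lt with h0 | hpos
    · rw [← h0]; simp
    · exact mul_nonneg (le_of_lt hpos)
        (sub_nonneg.mpr (Real.logb_le_logb_of_le hq hpos (hfg a v)))
  have hzero : ∀ v a, f a v * (Real.logb q (g v) - Real.logb q (f a v)) = 0 := by
    have houter : ∀ v ∈ Finset.univ,
        (0:ℝ) ≤ ∑ a, f a v * (Real.logb q (g v) - Real.logb q (f a v)) :=
      fun v _ => Finset.sum_nonneg fun a _ => tnn v a
    have h0 : ∑ v, ∑ a, f a v * (Real.logb q (g v) - Real.logb q (f a v)) = 0 := by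
      rw [← hent]; exact h
    intro v a
    have hinner := (Finset.sum_eq_zero_iff_of_nonneg houter).mp h0 v (Finset.mem_univ v)
    exact (Finset.sum_eq_zero_iff_of_nonneg (fun a _ => tnn v a)).mp hinner a
      (Finset.mem_univ a)
  have heq : ∀ b : α, 0 < f b v → f b v = g v := by
    intro b hb
    rcases (hfg b v).eq_or_lt with h0 | hlt
    · exact h0
    · exfalso
      have : Real.logb q (f b v) < Real.logb q (g v) := Real.logb_lt_logb hq hb hlt
      have := hzero v b
      nlinarith
  by_contra hne
  have hsum : f a v + f a' v ≤ g v := by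
    rw [hgf v]
    calc f a v + f a' v = ∑ x ∈ ({a, a'} : Finset α), f x v :=
          (Finset.sum_pair (f := fun x => f x v) hne).symm
      _ ≤ ∑ x, f x v := Finset.sum_le_sum_of_subset_of_nonneg (Finset.subset_univ _)
          (fun x _ _ => hfnn x v)
  have e1 := heq a ha
  have e2 := heq a' ha'
  simp only [hf] at e1 e2 hsum
  nlinarith [ha, ha']

/-- entropy lower bound from a uniform bound on atom probabilities -/
lemma ent_ge {α : Type*} [Fintype α] {q : ℕ} (hq : (1:ℝ) < (q:ℝ))
    (hp0 : ∀ ω, 0 ≤ p ω) (X : Ω → α) {ε : ℝ} (hε : 0 < ε)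
    (hb : ∀ a, pr p (fun ω => X ω = a) ≤ ε)
    (htot : (∑ a, pr p (fun ω => X ω = a)) = 1) :
    -Real.logb q ε ≤ ent q p X := by
  unfold ent
  have key : ∀ a ∈ Finset.univ,
      pr p (fun ω => X ω = a) * (-Real.logb q ε)
        ≤ -(pr p (fun ω => X ω = a) * Real.logb q (pr p (fun ω => X ω = a))) := by
    intro a _
    set t := pr p (fun ω => X ω = a) with ht
    rcases (pr_nonneg hp0 (fun ω => X ω = a)).eq_or_lt with h0 | hpos
    · rw [← ht] at h0; rw [← h0]; simp
    · have hle : Real.logb q t ≤ Real.logb q ε :=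
        Real.logb_le_logb_of_le hq hpos (hb a)
      nlinarith
  calc -Real.logb q ε = (∑ a, pr p (fun ω => X ω = a)) * (-Real.logb q ε) := by
        rw [htot]; ring
    _ = ∑ a, pr p (fun ω => X ω = a) * (-Real.logb q ε) := by rw [Finset.sum_mul]
    _ ≤ ∑ a, -(pr p (fun ω => X ω = a) * Real.logb q (pr p (fun ω => X ω = a))) :=
        Finset.sum_le_sum key
    _ = -∑ a, pr p (fun ω => X ω = a) * Real.logb q (pr p (fun ω => X ω = a)) := by
        rw [Finset.sum_neg_distrib]
end helpers

/-- **Lemma 1, part 3.** Assuming only correctness,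
`H(X_1, …, X_K) ≥ K·L`. -/
theorem lemma1_part3
    (F : Type) [Field F] [Fintype F]
    (K L LX LY : ℕ) (hK : 2 ≤ K) (hL : 1 ≤ L)
    (Ω : Type) [Fintype Ω] (p : Ω → ℝ)
    (hp0 : ∀ ω, 0 ≤ p ω) (hp1 : (∑ ω, p ω) = 1)
    (ZT : Fin K → Type) [∀ k, Fintype (ZT k)]
    (W : Fin K → Ω → Fin L → F)
    (Z : (k : Fin K) → Ω → ZT k)
    (X : Fin K → Ω → Fin LX → F)
    (Y : Fin K → Ω → Fin LY → F)
    -- inputs i.i.d. uniform on F^L and independent of the keys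
    (hWZ : ∀ (w : Fin K → Fin L → F) (z : (k : Fin K) → ZT k),
      pr p (fun ω => (∀ k, W k ω = w k) ∧ (∀ k, Z k ω = z k))
        = (1 / (Fintype.card F : ℝ) ^ L) ^ K * pr p (fun ω => ∀ k, Z k ω = z k))
    -- deterministic encoders X_k = φ_k(W_k, Z_k)
    (hX : ∀ k, ∃ φ : (Fin L → F) → ZT k → Fin LX → F, ∀ ω, X k ω = φ (W k ω) (Z k ω))
    -- deterministic server maps Y_k = ψ_k(X_1, …, X_K)
    (hY : ∀ k, ∃ ψ : (Fin K → Fin LX → F) → Fin LY → F, ∀ ω, Y k ω = ψ (fun u => X u ω))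
    -- correctness: H(Σ_u W_u | Y_k, W_k, Z_k) = 0
    (hCorr : ∀ k, condEnt (Fintype.card F) p (fun ω => ∑ u, W u ω)
        (fun ω => (Y k ω, W k ω, Z k ω)) = 0) :
    (K : ℝ) * (L : ℝ) ≤ ent (Fintype.card F) p (fun ω => fun k => X k ω) := by
  classical
  have hq : 1 < Fintype.card F := Fintype.one_lt_card
  have hq1 : (1:ℝ) < (Fintype.card F : ℝ) := by exact_mod_cast hq
  set c : ℝ := (1 / (Fintype.card F : ℝ) ^ L) ^ K with hc
  have hc0 : 0 < c := by positivity
  choose φ hφ using hX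
  choose ψ hψ using hY
  set Φ : (Fin K → Fin L → F) → ((k : Fin K) → ZT k) → (Fin K → Fin LX → F) :=
    fun w z => fun k => φ k (w k) (z k) with hΦ
  -- positivity of basic events
  have hev : ∀ (v : Fin K → Fin L → F) (z : (k : Fin K) → ZT k) (k : Fin K),
      0 < pr p (fun ω => ∀ u, Z u ω = z u) →
      0 < pr p (fun ω => (∑ u, W u ω) = (∑ u, v u) ∧
        (Y k ω, W k ω, Z k ω) = (ψ k (Φ v z), v k, z k)) := by
    intro v z k hz
    have hle : pr p (fun ω => (∀ u, W u ω = v u) ∧ (∀ u, Z u ω = z u))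
        ≤ pr p (fun ω => (∑ u, W u ω) = (∑ u, v u) ∧
          (Y k ω, W k ω, Z k ω) = (ψ k (Φ v z), v k, z k)) := by
      refine pr_mono hp0 fun ω hω => ?_
      obtain ⟨hW, hZ⟩ := hω
      have hXv : (fun u => X u ω) = Φ v z := by
        funext u
        rw [hφ u ω, hW u, hZ u]
      refine ⟨Finset.sum_congr rfl fun u _ => hW u, ?_⟩
      rw [hψ k ω, hXv, hW k, hZ k]
    calc (0:ℝ) < c * pr p (fun ω => ∀ u, Z u ω = z u) := mul_pos hc0 hz
      _ = pr p (fun ω => (∀ u, W u ω = v u) ∧ (∀ u, Z u ω = z u)) := (hWZ v z).symm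
      _ ≤ _ := hle
  -- injectivity of w ↦ Φ w z
  have hinj : ∀ (z : (k : Fin K) → ZT k),
      0 < pr p (fun ω => ∀ u, Z u ω = z u) →
      ∀ w w' : Fin K → Fin L → F, Φ w z = Φ w' z → w = w' := by
    intro z hz w w' hww
    funext j
    obtain ⟨k, hkj⟩ : ∃ k : Fin K, k ≠ j :=
      Fintype.exists_ne_of_one_lt_card (by rw [Fintype.card_fin]; omega) j
    set wA : Fin K → Fin L → F := Function.update w k (w' k) with hwA
    set wB : Fin K → Fin L → F := Function.update wA j (w' j) with hwB
    have hyb : ∀ v : Fin K → Fin L → F, (∀ u, v u = w u ∨ v u = w' u) →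
        Φ v z = Φ w z := by
      intro v hv
      funext u
      show φ u (v u) (z u) = φ u (w u) (z u)
      rcases hv u with h | h
      · rw [h]
      · rw [h]; exact (congrFun hww u).symm
    have hA : Φ wA z = Φ w z := by
      refine hyb wA fun u => ?_
      by_cases hu : u = k
      · subst hu; right; simp [hwA]
      · left; simp [hwA, Function.update_apply, hu]
    have hB : Φ wB z = Φ w z := by
      refine hyb wB fun u => ?_
      by_cases hu : u = j
      · subst hu; right; simp [hwB]
      · by_cases hu2 : u = k
        · subst hu2; right; simp [hwB, hwA, Function.update_apply, hu]
        · left; simp [hwB, hwA, Function.update_apply, hu, hu2]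
    have h1 := hev wA z k hz
    have h2 := hev wB z k hz
    rw [hA] at h1
    rw [hB] at h2
    have ekA : wA k = w' k := by simp [hwA]
    have ekB : wB k = w' k := by simp [hwB, hwA, Function.update_apply, hkj]
    rw [ekA] at h1
    rw [ekB] at h2
    have hsum : (∑ u, wA u) = (∑ u, wB u) :=
      det hq1 hp0 (fun ω => ∑ u, W u ω) (fun ω => (Y k ω, W k ω, Z k ω)) (hCorr k) h1 h2
    have hAj : wA j = w j := by
      simp [hwA, Function.update_apply, (Ne.symm hkj : j ≠ k)]
    have herase : ∑ u ∈ Finset.univ.erase j, wA u = ∑ u ∈ Finset.univ.erase j, wB u := by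
      refine Finset.sum_congr rfl fun u hu => ?_
      have huj : u ≠ j := Finset.ne_of_mem_erase hu
      simp [hwB, Function.update_apply, huj]
    rw [← Finset.add_sum_erase Finset.univ wA (Finset.mem_univ j),
        ← Finset.add_sum_erase Finset.univ wB (Finset.mem_univ j), herase] at hsum
    have hj : wA j = wB j := add_right_cancel hsum
    rw [hAj] at hj
    rw [hj]
    simp [hwB]
  -- total probability of keys
  have hsumZ : (∑ z : (k : Fin K) → ZT k, pr p (fun ω => ∀ u, Z u ω = z u)) = 1 := by
    calc ∑ z : (k : Fin K) → ZT k, pr p (fun ω => ∀ u, Z u ω = z u)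
        = ∑ z : (k : Fin K) → ZT k,
            pr p (fun ω => True ∧ (fun u => Z u ω) = z) :=
          Finset.sum_congr rfl fun z _ => pr_congr fun ω => by simp [funext_iff]
      _ = pr p (fun _ => True) := (pr_fiber _ _).symm
      _ = 1 := pr_true hp1
  -- atom bound
  have hatom : ∀ x : Fin K → Fin LX → F, pr p (fun ω => (fun k => X k ω) = x) ≤ c := by
    intro x
    have hterm : ∀ (w : Fin K → Fin L → F) (z : (k : Fin K) → ZT k),
        pr p (fun ω => ((fun k => X k ω) = x) ∧
            ((fun u => W u ω, fun u => Z u ω) = (w, z)))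
          = if Φ w z = x then c * pr p (fun ω => ∀ u, Z u ω = z u) else 0 := by
      intro w z
      by_cases hx : Φ w z = x
      · rw [if_pos hx, ← hWZ w z]
        refine pr_congr fun ω => ?_
        constructor
        · rintro ⟨-, h2⟩
          rw [Prod.mk.injEq] at h2
          exact ⟨fun u => congrFun h2.1 u, fun u => congrFun h2.2 u⟩
        · rintro ⟨hW, hZ⟩
          have hXx : (fun k => X k ω) = x := by
            rw [← hx]
            funext u
            rw [hφ u ω, hW u, hZ u]
          exact ⟨hXx, by rw [Prod.mk.injEq]; exact ⟨funext hW, funext hZ⟩⟩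
      · rw [if_neg hx, ← pr_false (p := p)]
        refine pr_congr fun ω => ?_
        constructor
        · rintro ⟨h1, h2⟩
          rw [Prod.mk.injEq] at h2
          refine hx ?_
          rw [← h1]
          funext u
          rw [hφ u ω, congrFun h2.1 u, congrFun h2.2 u]
        · exact False.elim
    calc pr p (fun ω => (fun k => X k ω) = x)
        = ∑ wz : (Fin K → Fin L → F) × ((k : Fin K) → ZT k),
            pr p (fun ω => ((fun k => X k ω) = x) ∧
              ((fun u => W u ω, fun u => Z u ω) = wz)) :=
          pr_fiber _ _
      _ = ∑ w : Fin K → Fin L → F, ∑ z : (k : Fin K) → ZT k,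
            (if Φ w z = x then c * pr p (fun ω => ∀ u, Z u ω = z u) else 0) := by
          rw [Fintype.sum_prod_type]
          exact Finset.sum_congr rfl fun w _ =>
            Finset.sum_congr rfl fun z _ => hterm w z
      _ = ∑ z : (k : Fin K) → ZT k, ∑ w : Fin K → Fin L → F,
            (if Φ w z = x then c * pr p (fun ω => ∀ u, Z u ω = z u) else 0) :=
          Finset.sum_comm
      _ ≤ ∑ z : (k : Fin K) → ZT k, c * pr p (fun ω => ∀ u, Z u ω = z u) := by
          refine Finset.sum_le_sum fun z _ => ?_
          by_cases hz : 0 < pr p (fun ω => ∀ u, Z u ω = z u)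
          · by_cases hex : ∃ w₀, Φ w₀ z = x
            · obtain ⟨w₀, hw₀⟩ := hex
              calc ∑ w : Fin K → Fin L → F,
                    (if Φ w z = x then c * pr p (fun ω => ∀ u, Z u ω = z u) else 0)
                  ≤ ∑ w : Fin K → Fin L → F,
                    (if w = w₀ then c * pr p (fun ω => ∀ u, Z u ω = z u) else 0) := by
                    refine Finset.sum_le_sum fun w _ => ?_
                    by_cases hw : Φ w z = x
                    · rw [if_pos hw, if_pos (hinj z hz w w₀ (hw.trans hw₀.symm))]
                    · rw [if_neg hw]
                      split
                      · exact mul_nonneg hc0.le (pr_nonneg hp0 _)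
                      · exact le_rfl
                _ = c * pr p (fun ω => ∀ u, Z u ω = z u) := by
                    rw [Finset.sum_ite_eq' Finset.univ w₀
                      (fun _ => c * pr p (fun ω => ∀ u, Z u ω = z u))]
                    simp
            · have hall : ∀ w : Fin K → Fin L → F,
                  (if Φ w z = x then c * pr p (fun ω => ∀ u, Z u ω = z u) else 0) = 0 :=
                fun w => if_neg fun hw => hex ⟨w, hw⟩
              simp only [hall, Finset.sum_const_zero]
              exact mul_nonneg hc0.le (pr_nonneg hp0 _)
          · have hz0 : pr p (fun ω => ∀ u, Z u ω = z u) = 0 :=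
              le_antisymm (not_lt.mp hz) (pr_nonneg hp0 _)
            simp [hz0]
      _ = c := by rw [← Finset.mul_sum, hsumZ, mul_one]
  -- total probability of X
  have htot : (∑ x : Fin K → Fin LX → F, pr p (fun ω => (fun k => X k ω) = x)) = 1 := by
    calc ∑ x : Fin K → Fin LX → F, pr p (fun ω => (fun k => X k ω) = x)
        = ∑ x : Fin K → Fin LX → F, pr p (fun ω => True ∧ (fun k => X k ω) = x) :=
          Finset.sum_congr rfl fun x _ => pr_congr fun ω => by simp
      _ = pr p (fun _ => True) := (pr_fiber _ _).symm
      _ = 1 := pr_true hp1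
  have hfin := ent_ge (q := Fintype.card F) hq1 hp0
    (fun ω => fun k => X k ω) hc0 hatom htot
  refine le_trans (le_of_eq ?_) hfin
  rw [hc, one_div, Real.logb_pow, Real.logb_inv, Real.logb_pow,
    Real.logb_self_eq_one hq1]
  ring
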